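/- arXiv:2108.02528 — 5 statements merged into one kernel-verified Lean document; each statement's English description precedes it below -/
import Mathlib

section
/- Let n be a positive integer and let u, v ∈ ℝⁿ. Define the n×n matrices A, B, C by A(i,j) = 1 + u_i v_j, B(i,j) = (1 + u_i v_j)^{n-1}, and C(i,j) = (1 + u_i v_j)^n. Then (n!)^2 · det(C) = n^n · det(B) · perm(A). -/
/-!
Expanding `(1 + u i * v j) ^ N` binomially factors the matrix as `V_u * diag (N.choose m) * V_vᵀ`,
where `V_w` is the `n × (N + 1)` matrix `(w i ^ m)`. For `N = n - 1` the factors are square,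
so `det B = ∏ (n - 1).choose m * Δ(u) * Δ(v)` with `Δ` the Vandermonde determinant.
For `N = n`, Cauchy–Binet writes `det C` as a sum over the omitted column `k`, and the maximal
minor of `V_w` omitting column `k` is `e_{n-k}(w) * Δ(w)`: compare the coefficients of `t ^ k` in
the Vandermonde determinant of `(t, w)`, which is `∏ (w j - t) * Δ(w)`. Expanding the product in
the permanent of `1 + u vᵀ` gives `∑ k, k! (n - k)! e_k(u) e_k(v)`. After `k ↦ n - k` the two
sides agree term by term, because
`n! * ∏_{m ≤ n} n.choose m = n ^ n * ∏_{m < n} (n - 1).choose m`,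
a product of the identities `(n - m) * n.choose m = n * (n - 1).choose m`.
-/

open Matrix Finset Equiv Polynomial
open scoped Nat

theorem Fin.succAbove_comp_perm_injective {n : ℕ} :
    Function.Injective fun p : Fin (n + 1) × Perm (Fin n) => p.1.succAbove ∘ p.2 := by
  rintro ⟨k, σ⟩ ⟨l, τ⟩ h
  have hkl : k = l := by
    simpa [Set.range_comp, σ.surjective.range_eq, τ.surjective.range_eq] using
      congrArg Set.range h
  subst hkl
  simp only [Prod.mk.injEq, true_and]
  ext i
  exact congrArg Fin.val (Fin.succAbove_right_injective (congrFun h i))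

theorem Fin.exists_succAbove_comp_perm_eq {n : ℕ} {f : Fin n → Fin (n + 1)}
    (hf : Function.Injective f) :
    ∃ k : Fin (n + 1), ∃ σ : Perm (Fin n), k.succAbove ∘ σ = f := by
  obtain ⟨k, hk⟩ : ∃ k, k ∉ Set.range f := by
    by_contra! h
    simpa using Fintype.card_le_of_surjective f h
  obtain ⟨g, rfl⟩ := Set.range_subset_range_iff_exists_comp.1
    (show Set.range f ⊆ Set.range k.succAbove by simpa [Fin.range_succAbove] using hk)
  exact ⟨k, Equiv.ofBijective g (Finite.injective_iff_bijective.1 hf.of_comp), rfl⟩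

section CommRing

variable {R : Type*} [CommRing R]

theorem Matrix.det_mul_eq_sum_prod_mul_det_submatrix {ι κ : Type*} [Fintype ι] [DecidableEq ι]
    [Fintype κ] (X : Matrix ι κ R) (Y : Matrix κ ι R) :
    det (X * Y) = ∑ f : ι → κ, (∏ i, X i (f i)) * det (Y.submatrix f id) := by
  have hrows : X * Y = fun i => ∑ k, X i k • Y k := by
    ext i j
    simp [mul_apply, Finset.sum_apply]
  rw [hrows]
  change (detRowAlternating : (ι → R) [⋀^ι]→ₗ[R] R).toMultilinearMap _ = _
  rw [MultilinearMap.map_sum]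
  refine sum_congr rfl fun f _ => ?_
  rw [MultilinearMap.map_smul_univ]
  rfl

theorem Matrix.det_mul_eq_sum_det_submatrix_succAbove {n : ℕ}
    (X : Matrix (Fin n) (Fin (n + 1)) R) (Y : Matrix (Fin (n + 1)) (Fin n) R) :
    det (X * Y) =
      ∑ k : Fin (n + 1), det (X.submatrix id k.succAbove) * det (Y.submatrix k.succAbove id) := by
  classical
  have himage : univ.image (fun p : Fin (n + 1) × Perm (Fin n) => p.1.succAbove ∘ p.2) =
      ({f | Function.Injective f} : Finset (Fin n → Fin (n + 1))) := by
    ext f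
    simp only [mem_image, mem_univ, true_and, mem_filter, Prod.exists]
    refine ⟨?_, Fin.exists_succAbove_comp_perm_eq⟩
    rintro ⟨k, σ, rfl⟩
    exact (Fin.succAbove_right_injective).comp σ.injective
  rw [det_mul_eq_sum_prod_mul_det_submatrix, ← sum_filter_of_ne (p := Function.Injective),
    ← himage, sum_image Fin.succAbove_comp_perm_injective.injOn, Fintype.sum_prod_type]
  · refine sum_congr rfl fun k _ => ?_
    rw [← det_transpose (X.submatrix _ _), det_apply', sum_mul]
    refine sum_congr rfl fun σ _ => ?_
    have hperm :
        Y.submatrix (k.succAbove ∘ σ) id = (Y.submatrix k.succAbove id).submatrix σ id := rfl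
    simp only [hperm, det_permute, Function.comp_apply, transpose_apply, submatrix_apply, id]
    ring
  · intro f _ hf
    contrapose! hf
    obtain ⟨i, j, hij, hne⟩ := Function.not_injective_iff.1 hf
    rw [det_zero_of_row_eq hne (by ext; simp [hij]), mul_zero]

variable {n : ℕ}

theorem Matrix.det_vandermonde_cons (t : R) (w : Fin n → R) :
    det (vandermonde (Fin.cons t w : Fin (n + 1) → R)) =
      (∏ j, (w j - t)) * det (vandermonde w) := by
  rw [det_vandermonde, det_vandermonde, Fin.prod_univ_succ, Fin.prod_Ioi_zero]
  simp [Fin.prod_Ioi_succ]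

theorem Polynomial.coeff_prod_C_sub_X (w : Fin n → R) {k : ℕ} (hk : k ≤ n) :
    (∏ j, (C (w j) - X)).coeff k = (-1) ^ k * (univ.val.map w).esymm (n - k) := by
  have hprod :
      ∏ j, (C (w j) - X) = C ((-1) ^ n) * ((univ.val.map w).map fun t => X - C t).prod := by
    rw [Multiset.map_map, Function.comp_def, prod_map_val, map_pow, map_neg, map_one]
    calc ∏ j, (C (w j) - X) = ∏ j, -(X - C (w j)) := by simp only [neg_sub]
      _ = _ := by rw [prod_neg, card_univ, Fintype.card_fin]
  rw [hprod, coeff_C_mul, Multiset.prod_X_sub_C_coeff _ (by simpa using hk)]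
  simp only [Multiset.card_map, card_val, card_univ, Fintype.card_fin]
  obtain ⟨m, rfl⟩ := Nat.exists_eq_add_of_le hk
  rw [Nat.add_sub_cancel_left, pow_add, mul_assoc, ← mul_assoc ((-1) ^ m), ← pow_add,
    Even.neg_one_pow ⟨m, rfl⟩, one_mul]

theorem Matrix.coeff_det_vandermonde_cons_X (w : Fin n → R) (k : Fin (n + 1)) :
    (det (vandermonde (Fin.cons X fun i => C (w i)))).coeff k =
      (-1) ^ (k : ℕ) * det (of fun i j : Fin n => w i ^ (k.succAbove j : ℕ)) := by
  have hminor (j : Fin (n + 1)) :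
      (vandermonde (Fin.cons X fun i => C (w i))).submatrix Fin.succ j.succAbove =
        (of fun i j' : Fin n => w i ^ (j.succAbove j' : ℕ)).map C := by
    ext
    simp only [submatrix_apply, vandermonde_apply, Fin.cons_succ, map_apply, of_apply, map_pow]
  have hterm (j : Fin (n + 1)) :
      (-1) ^ (j : ℕ) * vandermonde (Fin.cons X fun i => C (w i)) 0 j *
          det ((vandermonde (Fin.cons X fun i => C (w i))).submatrix Fin.succ j.succAbove) =
        C ((-1) ^ (j : ℕ) * det (of fun i j' : Fin n => w i ^ (j.succAbove j' : ℕ))) *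
          X ^ (j : ℕ) := by
    rw [hminor, ← RingHom.mapMatrix_apply, ← RingHom.map_det, vandermonde_apply, Fin.cons_zero]
    simp only [map_mul, map_pow, map_neg, map_one]
    ring
  simp only [det_succ_row_zero, hterm, finsetSum_coeff, coeff_C_mul_X_pow, Fin.val_inj]
  simp

theorem Matrix.det_submatrix_vandermonde_succAbove (w : Fin n → R) (k : Fin (n + 1)) :
    det (of fun i j : Fin n => w i ^ (k.succAbove j : ℕ)) =
      (univ.val.map w).esymm (n - k) * det (vandermonde w) := by
  have hroots : (det (vandermonde (Fin.cons X fun i => C (w i)))).coeff k =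
      (-1) ^ (k : ℕ) * ((univ.val.map w).esymm (n - k) * det (vandermonde w)) := by
    have hC : vandermonde (fun i => C (w i)) = (vandermonde w).map C := by ext; simp
    rw [det_vandermonde_cons, hC, ← RingHom.mapMatrix_apply, ← RingHom.map_det, coeff_mul_C,
      coeff_prod_C_sub_X w (by omega), mul_assoc]
  exact ((isUnit_neg_one (α := R)).pow _).mul_left_cancel
    ((coeff_det_vandermonde_cons_X w k).symm.trans hroots)

theorem Matrix.of_one_add_mul_pow_eq_mul {ι κ : Type*} (u : ι → R) (v : κ → R) (N : ℕ) :
    of (fun i j => (1 + u i * v j) ^ N) =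
      (of fun i (m : Fin (N + 1)) => (N.choose m : R) * u i ^ (m : ℕ)) *
        of fun (m : Fin (N + 1)) j => v j ^ (m : ℕ) := by
  ext i j
  rw [mul_apply, of_apply, add_comm, add_pow, ← Fin.sum_univ_eq_sum_range]
  refine sum_congr rfl fun m _ => ?_
  simp only [of_apply, one_pow, mul_one, mul_pow]
  ring

theorem Matrix.det_of_one_add_mul_pow_eq_prod_choose (N : ℕ) (u v : Fin (N + 1) → R) :
    det (of fun i j => (1 + u i * v j) ^ N) =
      (∏ m : Fin (N + 1), (N.choose m : R)) * det (vandermonde u) * det (vandermonde v) := by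
  rw [of_one_add_mul_pow_eq_mul, det_mul, ← det_mul_row, ← det_transpose (vandermonde v)]
  rfl

theorem Matrix.det_of_one_add_mul_pow_eq_sum (u v : Fin n → R) :
    det (of fun i j => (1 + u i * v j) ^ n) =
      ∑ k : Fin (n + 1), (∏ i : Fin n, (n.choose (k.succAbove i) : R)) *
        ((univ.val.map u).esymm (n - k) * det (vandermonde u)) *
        ((univ.val.map v).esymm (n - k) * det (vandermonde v)) := by
  rw [of_one_add_mul_pow_eq_mul, det_mul_eq_sum_det_submatrix_succAbove]
  refine sum_congr rfl fun k _ => ?_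
  rw [← det_submatrix_vandermonde_succAbove, ← det_submatrix_vandermonde_succAbove,
    ← det_mul_row, ← det_transpose (of fun i j : Fin n => v i ^ (k.succAbove j : ℕ))]
  rfl

section Fintype

variable {α : Type*} [Fintype α] [DecidableEq α]

theorem Finset.exists_perm_image_eq {S T : Finset α} (h : #S = #T) :
    ∃ τ : Perm α, S.image τ = T := by
  let e : {x // x ∈ S} ≃ {x // x ∈ T} := Fintype.equivOfCardEq (by simpa using h)
  refine ⟨e.extendSubtype, eq_of_subset_of_card_le ?_ ?_⟩
  · intro x hx
    obtain ⟨a, ha, rfl⟩ := mem_image.1 hx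
    exact e.extendSubtype_mem a ha
  · rw [card_image_of_injective _ e.extendSubtype.injective, h]

theorem Finset.card_filter_perm_image_eq {S T : Finset α} (h : #S = #T) :
    #{σ : Perm α | S.image σ = T} = #{σ : Perm α | S.image σ = S} := by
  obtain ⟨τ, rfl⟩ := exists_perm_image_eq h
  refine card_bij' (fun σ _ => τ⁻¹ * σ) (fun σ _ => τ * σ) ?_ ?_ ?_ ?_
  · intro σ hσ
    simp only [mem_filter, mem_univ, true_and] at hσ ⊢
    rw [Perm.coe_mul, ← image_image, hσ, image_image]
    simp
  · intro σ hσ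
    simp only [mem_filter, mem_univ, true_and] at hσ ⊢
    rw [Perm.coe_mul, ← image_image, hσ]
  · simp
  · simp

theorem Finset.card_filter_perm_image_eq_factorial {S T : Finset α} (h : #S = #T) :
    #{σ : Perm α | S.image σ = T} = (#S)! * (Fintype.card α - #S)! := by
  have hfibers :
      (Fintype.card α)! = ∑ T ∈ powersetCard #S univ, #{σ : Perm α | S.image σ = T} := by
    rw [← Fintype.card_perm, ← card_univ]
    exact card_eq_sum_card_fiberwise fun σ _ => mem_powersetCard.2
      ⟨subset_univ _, card_image_of_injective _ σ.injective⟩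
  rw [sum_congr rfl fun T hT => card_filter_perm_image_eq (mem_powersetCard.1 hT).2.symm,
    sum_const, card_powersetCard, card_univ, smul_eq_mul] at hfibers
  have hS : #S ≤ Fintype.card α := card_le_univ S
  rw [card_filter_perm_image_eq h]
  refine Nat.eq_of_mul_eq_mul_left (Nat.choose_pos hS) ?_
  rw [← hfibers, ← mul_assoc, Nat.choose_mul_factorial_mul_factorial hS]

theorem Finset.sum_perm_prod_apply_eq_mul_esymm (u : α → R) (S : Finset α) :
    ∑ σ : Perm α, ∏ i ∈ S, u (σ i) =
      ((#S)! * (Fintype.card α - #S)! : ℕ) * (univ.val.map u).esymm #S := by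
  have himage (σ : Perm α) : ∏ i ∈ S, u (σ i) = ∏ j ∈ S.image σ, u j :=
    (prod_image fun _ _ _ _ h => σ.injective h).symm
  simp only [himage]
  rw [← sum_fiberwise_of_maps_to (g := fun σ : Perm α => S.image σ) fun σ _ =>
      mem_powersetCard.2 ⟨subset_univ (S.image σ), card_image_of_injective S σ.injective⟩,
    esymm_map_val, mul_sum]
  refine sum_congr rfl fun T hT => ?_
  rw [sum_congr rfl fun σ hσ => by rw [(mem_filter.1 hσ).2], sum_const,
    card_filter_perm_image_eq_factorial (mem_powersetCard.1 hT).2.symm, nsmul_eq_mul]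

theorem Matrix.permanent_of_one_add_mul (u v : α → R) :
    permanent (of fun i j => 1 + u i * v j) =
      ∑ k ∈ range (Fintype.card α + 1),
        ((k ! * (Fintype.card α - k)! : ℕ) : R) * (univ.val.map u).esymm k *
          (univ.val.map v).esymm k := by
  have hexpand (σ : Perm α) : ∏ i, (1 + u (σ i) * v i) =
      ∑ S ∈ univ.powerset, (∏ i ∈ S, v i) * ∏ i ∈ S, u (σ i) := by
    rw [prod_one_add]
    refine sum_congr rfl fun S _ => ?_
    rw [prod_mul_distrib, mul_comm]
  simp only [permanent, of_apply, hexpand]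
  rw [sum_comm, sum_powerset]
  simp only [← mul_sum, sum_perm_prod_apply_eq_mul_esymm]
  refine sum_congr rfl fun k _ => ?_
  rw [sum_congr rfl fun S hS => by rw [(mem_powersetCard.1 hS).2], ← sum_mul,
    esymm_map_val (s := univ) v]
  exact mul_comm _ _

end Fintype

end CommRing

theorem Nat.factorial_mul_prod_choose_succ (N : ℕ) :
    (N + 1)! * ∏ m : Fin (N + 2), (N + 1).choose m =
      (N + 1) ^ (N + 1) * ∏ m : Fin (N + 1), N.choose m := by
  rw [Fin.prod_univ_castSucc, Fin.val_last, choose_self, mul_one, ← descFactorial_self,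
    descFactorial_eq_prod_range, prod_range, ← prod_mul_distrib]
  calc ∏ m : Fin (N + 1), (N + 1 - m) * (N + 1).choose m
      = ∏ m : Fin (N + 1), N.choose m * (N + 1) :=
        prod_congr rfl fun m _ => by rw [choose_mul_succ_eq, mul_comm]
    _ = _ := by rw [prod_mul_distrib, prod_const, Finset.card_univ, Fintype.card_fin, mul_comm]

theorem Nat.factorial_sq_mul_prod_choose_succAbove (N : ℕ) (k : Fin (N + 2)) :
    (N + 1)! ^ 2 * ∏ i : Fin (N + 1), (N + 1).choose (k.succAbove i) =
      (N + 1) ^ (N + 1) * (∏ m : Fin (N + 1), N.choose m) * ((k : ℕ)! * (N + 1 - k)!) := by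
  have hk : (k : ℕ) ≤ N + 1 := Fin.is_le k
  refine Nat.eq_of_mul_eq_mul_left (choose_pos hk) ?_
  calc (N + 1).choose k * ((N + 1)! ^ 2 * ∏ i : Fin (N + 1), (N + 1).choose (k.succAbove i))
      = (N + 1)! * ((N + 1)! * ∏ m : Fin (N + 2), (N + 1).choose m) := by
        rw [Fin.prod_univ_succAbove _ k]; ring
    _ = _ := by
        rw [factorial_mul_prod_choose_succ, ← choose_mul_factorial_mul_factorial hk]; ring

theorem stmt_1_general (n : ℕ) (u v : Fin n → ℝ)
    (A B C : Matrix (Fin n) (Fin n) ℝ)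
    (hA : ∀ i j, A i j = 1 + u i * v j)
    (hB : ∀ i j, B i j = (1 + u i * v j) ^ (n - 1))
    (hC : ∀ i j, C i j = (1 + u i * v j) ^ n) :
    ((n.factorial : ℝ)) ^ 2 * C.det = (n : ℝ) ^ n * B.det * A.permanent := by
  cases n with
  | zero => simp [permanent_isEmpty]
  | succ N =>
    obtain rfl : A = of fun i j => 1 + u i * v j := ext hA
    obtain rfl : B = of fun i j => (1 + u i * v j) ^ N := ext hB
    obtain rfl : C = of fun i j => (1 + u i * v j) ^ (N + 1) := ext hC
    rw [det_of_one_add_mul_pow_eq_sum, det_of_one_add_mul_pow_eq_prod_choose,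
      permanent_of_one_add_mul, Fintype.card_fin, sum_range, mul_sum, mul_sum]
    refine Fintype.sum_equiv Fin.revPerm _ _ fun k => ?_
    have hrev : ((Fin.revPerm k : Fin (N + 2)) : ℕ) = N + 1 - k := by simp [Fin.val_rev]
    have hcoeff :=
      congrArg (Nat.cast : ℕ → ℝ) (Nat.factorial_sq_mul_prod_choose_succAbove N k)
    push_cast at hcoeff
    rw [hrev, Nat.sub_sub_self (Fin.is_le k)]
    push_cast
    linear_combination ((univ.val.map u).esymm (N + 1 - k) * det (vandermonde u) *
      ((univ.val.map v).esymm (N + 1 - k) * det (vandermonde v))) * hcoeff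

theorem stmt_1 (n : ℕ) (hn : 0 < n) (u v : Fin n → ℝ)
    (A B C : Matrix (Fin n) (Fin n) ℝ)
    (hA : ∀ i j, A i j = 1 + u i * v j)
    (hB : ∀ i j, B i j = (1 + u i * v j) ^ (n - 1))
    (hC : ∀ i j, C i j = (1 + u i * v j) ^ n) :
    ((n.factorial : ℝ)) ^ 2 * C.det = (n : ℝ) ^ n * B.det * A.permanent :=
  stmt_1_general n u v A B C hA hB hC
end

section
/- Let n be a positive integer and let u, v ∈ ℝⁿ. If B is the n×n matrix with entries B(i,j) = (1 + u_i v_j)^{n-1}, then det(B) = Δ(u) · Δ(v) · ∏_{j=0}^{n-1} C(n-1, j), where C(n-1, j) denotes the binomial coefficient (n-1 choose j). -/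
open Matrix

/-- The Vandermonde polynomial `∏_{i < j} (x_j - x_i)` of a vector. -/
noncomputable def vmd {n : ℕ} (x : Fin n → ℝ) : ℝ :=
  ∏ i : Fin n, ∏ j ∈ Finset.Ioi i, (x j - x i)

/- The binomial expansion `(1 + u_i v_j)^(n-1) = ∑_k C(n-1, k) u_i^k v_j^k` is this matrix
product, with exactly `n` terms, so all three factors are square. -/
theorem Matrix.of_one_add_mul_pow_eq_vandermonde_mul {R : Type*} [CommRing R] {n : ℕ}
    (u v : Fin n → R) :
    of (fun i j => (1 + u i * v j) ^ (n - 1)) =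
      vandermonde u * diagonal (fun k : Fin n => ((n - 1).choose k : R)) * (vandermonde v)ᵀ := by
  cases n with
  | zero => exact Subsingleton.elim _ _
  | succ m =>
    ext i j
    rw [mul_apply]
    simp only [of_apply, Nat.add_sub_cancel, mul_diagonal, vandermonde_apply, transpose_apply]
    rw [add_comm, add_pow, ← Fin.sum_univ_eq_sum_range (fun k => (u i * v j) ^ k * 1 ^ (m - k) *
      (m.choose k : R))]
    exact Finset.sum_congr rfl fun k _ => by ring

theorem Matrix.det_of_one_add_mul_pow {R : Type*} [CommRing R] {n : ℕ} (u v : Fin n → R) :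
    (of fun i j => (1 + u i * v j) ^ (n - 1)).det =
      (vandermonde u).det * (vandermonde v).det * ∏ k ∈ Finset.range n, ((n - 1).choose k : R) := by
  rw [of_one_add_mul_pow_eq_vandermonde_mul, det_mul, det_mul, det_transpose, det_diagonal,
    Fin.prod_univ_eq_prod_range (fun k => ((n - 1).choose k : R))]
  ring

theorem stmt_2_general (n : ℕ) (u v : Fin n → ℝ)
    (B : Matrix (Fin n) (Fin n) ℝ)
    (hB : ∀ i j, B i j = (1 + u i * v j) ^ (n - 1)) :
    B.det = vmd u * vmd v * ∏ j ∈ Finset.range n, ((n - 1).choose j : ℝ) := by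
  have hB' : B = of fun i j => (1 + u i * v j) ^ (n - 1) := ext hB
  rw [hB', det_of_one_add_mul_pow, det_vandermonde, det_vandermonde, vmd, vmd]

theorem stmt_2 (n : ℕ) (hn : 0 < n) (u v : Fin n → ℝ)
    (B : Matrix (Fin n) (Fin n) ℝ)
    (hB : ∀ i j, B i j = (1 + u i * v j) ^ (n - 1)) :
    B.det = vmd u * vmd v * ∏ j ∈ Finset.range n, ((n - 1).choose j : ℝ) :=
  stmt_2_general n u v B hB
end

section
/- Let n be a positive integer and let u, v ∈ ℝⁿ. If A is the n×n matrix with entries A(i,j) = 1 + u_i v_j, then perm(A) = Σ_{k=0}^{n} k! · (n−k)! · e_k(u) · e_k(v). -/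
open Matrix

/-- The `k`-th elementary symmetric polynomial evaluated at a vector. -/
noncomputable def esym {n : ℕ} (k : ℕ) (x : Fin n → ℝ) : ℝ :=
  ∑ S ∈ Finset.univ.powersetCard k, ∏ i ∈ S, x i

/-!
Expanding `∏ i, (1 + u (σ i) * v i)` over subsets gives
`perm A = ∑ T, (∏ i ∈ T, v i) * ∑ σ, ∏ i ∈ T, u (σ i)`. The inner sum depends only on
`#T = k`, since precomposing with a permutation carrying one `k`-set onto another permutes `Perm ι`.
Summing it over all `k`-sets and exchanging the two sums gives `n! * e_k(u)`, so each inner sum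
equals `n! / (n choose k) * e_k(u) = k! * (n - k)! * e_k(u)`.
-/

open Finset Equiv Fintype
open scoped Nat

section

variable {ι R : Type*} [Fintype ι]

theorem sum_powersetCard_prod_comp_perm [CommSemiring R] (k : ℕ) (x : ι → R) (σ : Perm ι) :
    ∑ T ∈ powersetCard k univ, ∏ i ∈ T, x (σ i)
      = ∑ T ∈ powersetCard k univ, ∏ i ∈ T, x i := by
  conv_rhs => rw [← map_univ_equiv σ, powersetCard_map, sum_map]
  simp only [RelEmbedding.coe_toEmbedding, mapEmbedding_apply, prod_map, Equiv.coe_toEmbedding]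

theorem sum_perm_prod_comp_eq_of_card_eq [DecidableEq ι] [CommSemiring R] (x : ι → R)
    {S T : Finset ι} (h : #S = #T) :
    ∑ σ : Perm ι, ∏ i ∈ S, x (σ i) = ∑ σ : Perm ι, ∏ i ∈ T, x (σ i) := by
  obtain ⟨τ, rfl⟩ := Perm.exists_map_finset_eq S T h
  simp only [prod_map, Equiv.coe_toEmbedding]
  exact (sum_comp (Equiv.mulRight τ) fun σ => ∏ i ∈ S, x (σ i)).symm

theorem sum_perm_prod_comp_of_card_eq [DecidableEq ι] [CommRing R] [IsDomain R] [CharZero R]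
    (x : ι → R) {T : Finset ι} {k : ℕ} (hT : #T = k) :
    ∑ σ : Perm ι, ∏ i ∈ T, x (σ i)
      = k ! * (card ι - k)! * ∑ S ∈ powersetCard k univ, ∏ i ∈ S, x i := by
  have hk : k ≤ card ι := hT ▸ card_le_univ T
  have double_count : ((card ι).choose k : R) * ∑ σ : Perm ι, ∏ i ∈ T, x (σ i)
      = (card ι)! * ∑ S ∈ powersetCard k univ, ∏ i ∈ S, x i := by
    calc ((card ι).choose k : R) * ∑ σ : Perm ι, ∏ i ∈ T, x (σ i)
        = ∑ S ∈ powersetCard k univ, ∑ σ : Perm ι, ∏ i ∈ S, x (σ i) := by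
          rw [Finset.sum_congr rfl fun S hS => sum_perm_prod_comp_eq_of_card_eq x
            ((mem_powersetCard.1 hS).2.trans hT.symm), sum_const, card_powersetCard, card_univ,
            nsmul_eq_mul]
      _ = ∑ σ : Perm ι, ∑ S ∈ powersetCard k univ, ∏ i ∈ S, x i := by
          rw [sum_comm]
          simp_rw [sum_powersetCard_prod_comp_perm]
      _ = (card ι)! * ∑ S ∈ powersetCard k univ, ∏ i ∈ S, x i := by
          rw [sum_const, card_univ, card_perm, nsmul_eq_mul]
  have hchoose : ((card ι).choose k : R) ≠ 0 := by exact_mod_cast (Nat.choose_pos hk).ne'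
  apply mul_left_cancel₀ hchoose
  rw [double_count, ← Nat.choose_mul_factorial_mul_factorial hk]
  push_cast
  ring

theorem permanent_one_add_mul [DecidableEq ι] [CommRing R] [IsDomain R] [CharZero R]
    (u v : ι → R) :
    (of fun i j => 1 + u i * v j).permanent
      = ∑ k ∈ range (card ι + 1), (k ! * (card ι - k)! : R)
          * (∑ S ∈ powersetCard k univ, ∏ i ∈ S, u i)
          * ∑ S ∈ powersetCard k univ, ∏ i ∈ S, v i := by
  calc (of fun i j => 1 + u i * v j).permanent
      = ∑ T ∈ univ.powerset, ∑ σ : Perm ι, (∏ i ∈ T, v i) * ∏ i ∈ T, u (σ i) := by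
        simp only [permanent, of_apply, prod_one_add, ← prod_mul_distrib, mul_comm (v _)]
        exact sum_comm
    _ = _ := by
        rw [sum_powerset, card_univ]
        refine sum_congr rfl fun k _ => ?_
        simp_rw [← mul_sum]
        rw [Finset.sum_congr rfl fun T hT =>
          congrArg _ (sum_perm_prod_comp_of_card_eq u (mem_powersetCard.1 hT).2), ← sum_mul]
        ring

end

theorem stmt_4_general (n : ℕ) (u v : Fin n → ℝ)
    (A : Matrix (Fin n) (Fin n) ℝ)
    (hA : ∀ i j, A i j = 1 + u i * v j) :
    A.permanent = ∑ k ∈ Finset.range (n + 1),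
      (k.factorial : ℝ) * ((n - k).factorial : ℝ) * esym k u * esym k v := by
  obtain rfl : A = of fun i j => 1 + u i * v j := ext hA
  simpa only [Fintype.card_fin, esym] using permanent_one_add_mul u v

theorem stmt_4 (n : ℕ) (hn : 0 < n) (u v : Fin n → ℝ)
    (A : Matrix (Fin n) (Fin n) ℝ)
    (hA : ∀ i j, A i j = 1 + u i * v j) :
    A.permanent = ∑ k ∈ Finset.range (n + 1),
      (k.factorial : ℝ) * ((n - k).factorial : ℝ) * esym k u * esym k v :=
  stmt_4_general n u v A hA
end

section
/- Let n be a positive integer, let x ∈ ℝⁿ, and let 0 ≤ k ≤ n. Let Q_x^k be the n×n matrix (rows and columns indexed by 1, …, n) with entries Q_x^k(i,j) = x_j^i if i > k and Q_x^k(i,j) = x_j^{i-1} if i ≤ k. Then det(Q_x^k) = e_{n-k}(x) · Δ(x). -/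
open Matrix

/-!
Over `R[X]`, the Vandermonde determinant of `(-X, v₀, …, vₙ₋₁)` equals `Δ(v) · ∏ᵢ (X + vᵢ)` by the
product formula, so by Vieta its coefficient of `X ^ k` is `e_{n-k}(v) · Δ(v)`. Laplace expansion
along the row of `-X` gives the same determinant as `∑ₖ det(Mₖ) · X ^ k`, where `Mₖ` is the
Vandermonde matrix of `v` with the power `k` skipped, i.e. the transpose of `Q_x^k`; taking `-X`
rather than `X` makes the Laplace signs `(-1)ᵏ` cancel.
-/

open Polynomial Finset

namespace Matrix

variable {R : Type*} [CommRing R] {n : ℕ}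

def vandermondeSkip (v : Fin n → R) (k : Fin (n + 1)) : Matrix (Fin n) (Fin n) R :=
  .of fun i j => v i ^ (k.succAbove j : ℕ)

theorem det_vandermonde_cons_neg_X (v : Fin n → R) :
    det (vandermonde (Fin.cons (-X) (C ∘ v) : Fin (n + 1) → R[X])) =
      C (det (vandermonde v)) * ∏ i, (X + C (v i)) := by
  simp only [det_vandermonde, Fin.prod_univ_succ, Fin.prod_Ioi_zero, Fin.prod_Ioi_succ,
    Fin.cons_zero, Fin.cons_succ, Function.comp_apply, map_prod, map_sub, sub_neg_eq_add,
    add_comm (C _) X]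
  ring

theorem det_vandermonde_cons_neg_X_eq_sum (v : Fin n → R) :
    det (vandermonde (Fin.cons (-X) (C ∘ v) : Fin (n + 1) → R[X])) =
      ∑ j : Fin (n + 1), C (det (vandermondeSkip v j)) * X ^ (j : ℕ) := by
  rw [det_succ_row_zero]
  refine sum_congr rfl fun j _ => ?_
  have hminor : (vandermonde (Fin.cons (-X) (C ∘ v) : Fin (n + 1) → R[X])).submatrix
      Fin.succ j.succAbove = (vandermondeSkip v j).map C := by
    ext i l
    simp only [submatrix_apply, vandermonde_apply, map_apply, vandermondeSkip, of_apply,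
      Fin.cons_succ, Function.comp_apply, map_pow]
  rw [hminor, ← RingHom.mapMatrix_apply, ← RingHom.map_det, vandermonde_apply, Fin.cons_zero,
    ← mul_pow, neg_one_mul, neg_neg, mul_comm]

theorem det_vandermondeSkip (v : Fin n → R) (k : Fin (n + 1)) :
    det (vandermondeSkip v k) =
      (∑ t ∈ univ.powersetCard (n - k), ∏ i ∈ t, v i) * det (vandermonde v) := by
  have h := congrArg (coeff · k) <|
    (det_vandermonde_cons_neg_X_eq_sum v).symm.trans (det_vandermonde_cons_neg_X v)
  simp only [finsetSum_coeff, coeff_C_mul, coeff_X_pow, mul_ite, mul_one, mul_zero, Fin.val_inj,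
    sum_ite_eq, mem_univ, if_true] at h
  rw [h, Finset.prod_X_add_C_coeff _ _ (by simpa using k.is_le), card_univ, Fintype.card_fin,
    mul_comm]

end Matrix

theorem stmt_5_general (n : ℕ) (x : Fin n → ℝ) (k : ℕ) (hk : k ≤ n)
    (Q : Matrix (Fin n) (Fin n) ℝ)
    (hQ : ∀ i j : Fin n,
      Q i j = if (i : ℕ) + 1 > k then x j ^ ((i : ℕ) + 1) else x j ^ (i : ℕ)) :
    Q.det = esym (n - k) x * vmd x := by
  set K : Fin (n + 1) := ⟨k, Nat.lt_succ_of_le hk⟩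
  have hQ' : Q = (vandermondeSkip x K)ᵀ := by
    ext i j
    rw [hQ, transpose_apply, vandermondeSkip, of_apply]
    rcases lt_or_ge (i : ℕ) k with h | h
    · rw [if_neg (by omega), Fin.succAbove_of_castSucc_lt K i (by simpa [Fin.lt_def, K] using h)]
      rfl
    · rw [if_pos (by omega), Fin.succAbove_of_le_castSucc K i (by simpa [Fin.le_def, K] using h)]
      rfl
  rw [hQ', det_transpose, det_vandermondeSkip, det_vandermonde]
  rfl

theorem stmt_5 (n : ℕ) (hn : 0 < n) (x : Fin n → ℝ) (k : ℕ) (hk : k ≤ n)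
    (Q : Matrix (Fin n) (Fin n) ℝ)
    (hQ : ∀ i j : Fin n,
      Q i j = if (i : ℕ) + 1 > k then x j ^ ((i : ℕ) + 1) else x j ^ (i : ℕ)) :
    Q.det = esym (n - k) x * vmd x :=
  stmt_5_general n x k hk Q hQ
end

section
/- Let n be a positive integer and let M be an n×n real matrix of rank 2 all of whose entries are nonzero. Let M_{-1} and M_{-2} denote the n×n matrices with entries M_{-1}(i,j) = M(i,j)^{-1} and M_{-2}(i,j) = M(i,j)^{-2}. Then det(M_{-2}) = det(M_{-1}) · perm(M_{-1}). -/
/-!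
Borchardt's identity `det (C ∘ C) = det C * perm C` for a Cauchy matrix `C i j = (x i - y j)⁻¹`
goes by induction on the size, treating the first node `x 0 = t` as a variable. Expanding along
the first row and multiplying by `∏ j, (t - y j) ^ 2` turns the defect
`det (C ∘ C) - det C * perm C` into a polynomial of degree `≤ 2n` in `t`. At `t = y j` only the
`j`-th cofactors survive, and they satisfy the identity by induction; at `t = x i` with `i ≠ 0`
two rows coincide. These `2n + 1` roots force the polynomial to vanish.

A matrix of rank `≤ 2`, `M i j = a i * c j + b i * d j`, can be sheared into the form
`M i j = u i * w j * (x i - y j)`; if no entry vanishes, `(M i j)⁻¹` is a Cauchy matrix with rows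
and columns rescaled, which multiplies the defect by a square.
-/

open Matrix Finset Polynomial

theorem Matrix.exists_eq_mul_add_mul_of_rank_le_two {m n K : Type*} [Fintype m] [Fintype n]
    [Field K] (M : Matrix m n K) (h : M.rank ≤ 2) :
    ∃ a b : m → K, ∃ c d : n → K, ∀ i j, M i j = a i * c j + b i * d j := by
  set W := Submodule.span K (Set.range M.col)
  have hW : Module.finrank K W ≤ Module.finrank K (Fin 2 → K) := by
    rwa [← rank_eq_finrank_span_cols, Module.finrank_fin_fun]
  obtain ⟨f, hf⟩ := finrank_le_iff_exists_linearMap.mp hW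
  obtain ⟨g, hgf⟩ := f.exists_leftInverse_of_injective (LinearMap.ker_eq_bot.mpr hf)
  let col (j : n) : W := ⟨M.col j, Submodule.subset_span ⟨j, rfl⟩⟩
  refine ⟨fun i => (g (Pi.single 0 1) : m → K) i, fun i => (g (Pi.single 1 1) : m → K) i,
    fun j => f (col j) 0, fun j => f (col j) 1, fun i j => ?_⟩
  have hcol : col j = ∑ l, f (col j) l • g (Pi.single l 1) := by
    conv_lhs => rw [← LinearMap.id_apply (R := K) (col j), ← hgf, LinearMap.comp_apply,
      pi_eq_sum_univ' (f (col j))]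
    simp only [map_sum, map_smul]
  have := congrArg (fun w : W => (w : m → K) i) hcol
  simp only [col, col_apply, Fin.sum_univ_two, Submodule.coe_add, Submodule.coe_smul,
    Pi.add_apply, Pi.smul_apply, smul_eq_mul] at this
  rw [this]
  ring

theorem exists_forall_ne_zero_fst_add_mul_snd_ne_zero {K : Type*} [Field K] [Infinite K]
    (s : Finset (K × K)) : ∃ ε : K, ∀ z ∈ s, z ≠ 0 → z.1 + ε * z.2 ≠ 0 := by
  classical
  obtain ⟨ε, hε⟩ := Infinite.exists_notMem_finset (s.image fun z => -z.1 / z.2)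
  refine ⟨ε, fun z hz hz0 hzε => ?_⟩
  by_cases hz2 : z.2 = 0
  · rw [hz2, mul_zero, add_zero] at hzε
    exact hz0 (Prod.ext hzε hz2)
  · refine hε (mem_image.mpr ⟨z, hz, ?_⟩)
    field_simp
    linear_combination -hzε

theorem Matrix.exists_eq_mul_mul_sub_of_rank_le_two {m n K : Type*} [Fintype m] [Fintype n]
    [Field K] [Infinite K] (M : Matrix m n K) (h : M.rank ≤ 2) :
    ∃ (u x : m → K) (w y : n → K), ∀ i j, M i j = u i * w j * (x i - y j) := by
  classical
  obtain ⟨a, b, c, d, hM⟩ := M.exists_eq_mul_add_mul_of_rank_le_two h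
  -- The shear `a ↦ a + ε b`, `d ↦ d - ε c` keeps `a c + b d`; for generic `ε` the new
  -- coefficients vanish only where the whole row (column) of `M` does.
  obtain ⟨ε, hε⟩ := exists_forall_ne_zero_fst_add_mul_snd_ne_zero
    (univ.image (fun i => (a i, b i)) ∪ univ.image (fun j => (d j, -c j)))
  have hrow (i : m) (hi : a i + ε * b i = 0) : a i = 0 ∧ b i = 0 :=
    Prod.ext_iff.mp (not_imp_not.mp (hε _ (mem_union_left _ (mem_image_of_mem _ (mem_univ i)))) hi)
  have hcol (j : n) (hj : d j + ε * -c j = 0) : d j = 0 ∧ c j = 0 := by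
    simpa using not_imp_not.mp (hε _ (mem_union_right _ (mem_image_of_mem _ (mem_univ j)))) hj
  refine ⟨fun i => a i + ε * b i, fun i => b i / (a i + ε * b i),
    fun j => d j + ε * -c j, fun j => -c j / (d j + ε * -c j), fun i j => ?_⟩
  simp only [hM]
  by_cases hu : a i + ε * b i = 0
  · simp [hrow i hu]
  by_cases hw : d j + ε * -c j = 0
  · simp [hcol j hw]
  rw [show a i * c j + b i * d j = (a i + ε * b i) * c j + b i * (d j + ε * -c j) by ring]
  generalize a i + ε * b i = u at hu ⊢
  generalize d j + ε * -c j = w at hw ⊢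
  field_simp
  ring

theorem Matrix.permanent_succ_column_zero {R : Type*} [CommRing R] {n : ℕ}
    (A : Matrix (Fin (n + 1)) (Fin (n + 1)) R) :
    A.permanent = ∑ i, A i 0 * (A.submatrix i.succAbove Fin.succ).permanent := by
  rw [permanent, univ_perm_fin_succ, ← univ_product_univ]
  simp only [sum_map, Equiv.toEmbedding_apply, sum_product]
  refine sum_congr rfl fun p _ => ?_
  simp only [Fin.prod_univ_succ, Equiv.Perm.decomposeFin_symm_apply_zero,
    Equiv.Perm.decomposeFin_symm_apply_succ, ← mul_sum]
  congr 1
  cases p using Fin.cases with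
  | zero =>
    exact sum_congr rfl fun e _ => prod_congr rfl fun x _ => by
      simp only [Equiv.swap_self, Equiv.refl_apply, Fin.succAbove_zero, submatrix_apply]
  | succ i =>
    -- `Fin.succAbove_cycleRange`: `i.succ.succAbove (i.cycleRange x) = swap 0 i.succ x.succ`
    rw [← permanent_permute_cols i.cycleRange, permanent]
    exact sum_congr rfl fun e _ => prod_congr rfl fun x _ => by
      simp only [submatrix_apply, id_eq, Fin.succAbove_cycleRange]

theorem Matrix.permanent_succ_row_zero {R : Type*} [CommRing R] {n : ℕ}
    (A : Matrix (Fin (n + 1)) (Fin (n + 1)) R) :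
    A.permanent = ∑ j, A 0 j * (A.submatrix Fin.succ j.succAbove).permanent := by
  rw [← permanent_transpose A, permanent_succ_column_zero]
  exact sum_congr rfl fun j _ => congrArg _ (permanent_transpose _)

section Defect

variable {R n : Type*} [CommRing R] [Fintype n] [DecidableEq n]

def Matrix.borchardtDefect (A : Matrix n n R) : R := (A.map (· ^ 2)).det - A.det * A.permanent

theorem Matrix.det_of_mul_mul (r c : n → R) (A : Matrix n n R) :
    (of fun i j => r i * c j * A i j).det = (∏ i, r i) * (∏ j, c j) * A.det := by
  have : (of fun i j => r i * c j * A i j) = diagonal r * A * diagonal c := by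
    ext i j
    simp only [of_apply, diagonal_mul, mul_diagonal]
    ring
  rw [this, det_mul, det_mul, det_diagonal, det_diagonal]
  ring

theorem Matrix.permanent_of_mul_mul (r c : n → R) (A : Matrix n n R) :
    (of fun i j => r i * c j * A i j).permanent = (∏ i, r i) * (∏ j, c j) * A.permanent := by
  simp only [permanent, of_apply, mul_sum, prod_mul_distrib, Equiv.prod_comp]

theorem Matrix.borchardtDefect_of_mul_mul (r c : n → R) (A : Matrix n n R) :
    (of fun i j => r i * c j * A i j).borchardtDefect
      = (∏ i, r i) ^ 2 * (∏ j, c j) ^ 2 * A.borchardtDefect := by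
  have hsq : (of fun i j => r i * c j * A i j).map (· ^ 2)
      = of fun i j => r i ^ 2 * c j ^ 2 * A.map (· ^ 2) i j := by
    ext i j
    simp only [map_apply, of_apply, mul_pow]
  rw [borchardtDefect, borchardtDefect, hsq, det_of_mul_mul, det_of_mul_mul,
    permanent_of_mul_mul, prod_pow, prod_pow]
  ring

theorem Matrix.borchardtDefect_eq_zero_of_row_eq (A : Matrix n n R) {i i' : n} (hi : i ≠ i')
    (hA : A i = A i') : A.borchardtDefect = 0 := by
  have hA2 : A.map (· ^ 2) i = A.map (· ^ 2) i' := funext fun j => by simp only [map_apply, hA]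
  rw [borchardtDefect, det_zero_of_row_eq hi hA, det_zero_of_row_eq hi hA2, zero_mul, sub_zero]

theorem Matrix.borchardtDefect_eq_zero_of_column_eq (A : Matrix n n R) {j j' : n} (hj : j ≠ j')
    (hA : ∀ i, A i j = A i j') : A.borchardtDefect = 0 := by
  have hA2 (i : n) : A.map (· ^ 2) i j = A.map (· ^ 2) i j' := by simp only [map_apply, hA]
  rw [borchardtDefect, det_zero_of_column_eq hj hA, det_zero_of_column_eq hj hA2, zero_mul,
    sub_zero]

end Defect

variable {K : Type*} [Field K]

def Matrix.cauchy {m n : Type*} (x : m → K) (y : n → K) : Matrix m n K :=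
  of fun i j => (x i - y j)⁻¹

section RowPoly

variable {ι : Type*} [Fintype ι] [DecidableEq ι]

noncomputable def cauchyRowPoly (y c : ι → K) (k : ℕ) : K[X] :=
  ∑ j, C (c j) * Lagrange.nodal (univ.erase j) y ^ k

theorem eval_cauchyRowPoly {y : ι → K} (c : ι → K) (k : ℕ) {t : K} (ht : ∀ j, t ≠ y j) :
    (cauchyRowPoly y c k).eval t = (∑ j, c j * (t - y j)⁻¹ ^ k) * (∏ j, (t - y j)) ^ k := by
  simp only [cauchyRowPoly, eval_finsetSum, eval_mul, eval_C, eval_pow, Lagrange.eval_nodal,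
    sum_mul]
  refine sum_congr rfl fun j _ => ?_
  rw [← mul_prod_erase univ (fun m => t - y m) (mem_univ j), mul_pow, inv_pow, mul_assoc,
    inv_mul_cancel_left₀ (pow_ne_zero k (sub_ne_zero.mpr (ht j)))]

theorem eval_cauchyRowPoly_node (y c : ι → K) {k : ℕ} (hk : k ≠ 0) (j : ι) :
    (cauchyRowPoly y c k).eval (y j) = c j * (∏ m ∈ univ.erase j, (y j - y m)) ^ k := by
  rw [cauchyRowPoly, eval_finsetSum, sum_eq_single j]
  · simp only [eval_mul, eval_C, eval_pow, Lagrange.eval_nodal]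
  · intro j' _ hj'
    have hj : j ∈ univ.erase j' := mem_erase.mpr ⟨Ne.symm hj', mem_univ j⟩
    rw [eval_mul, eval_pow, Lagrange.eval_nodal_at_node hj, zero_pow hk, mul_zero]
  · exact fun hj => (hj (mem_univ j)).elim

theorem natDegree_cauchyRowPoly_le (y c : ι → K) (k : ℕ) :
    (cauchyRowPoly y c k).natDegree ≤ k * (Fintype.card ι - 1) :=
  natDegree_sum_le_of_forall_le _ _ fun j _ => (natDegree_C_mul_le _ _).trans <|
    natDegree_pow_le.trans <| by
      rw [Lagrange.natDegree_nodal, card_erase_of_mem (mem_univ j), card_univ]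

end RowPoly

section Borchardt

variable {n : ℕ}

noncomputable def borchardtPoly (x : Fin n → K) (y : Fin (n + 1) → K) : K[X] :=
  cauchyRowPoly y
      (fun j => (-1) ^ (j : ℕ) * ((cauchy x (y ∘ j.succAbove)).map (· ^ 2)).det) 2 -
    cauchyRowPoly y (fun j => (-1) ^ (j : ℕ) * (cauchy x (y ∘ j.succAbove)).det) 1 *
      cauchyRowPoly y (fun j => (cauchy x (y ∘ j.succAbove)).permanent) 1

theorem eval_borchardtPoly (x : Fin n → K) (y : Fin (n + 1) → K) {t : K}
    (ht : ∀ j, t ≠ y j) :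
    (borchardtPoly x y).eval t
      = (cauchy (Fin.cons t x) y).borchardtDefect * (∏ j, (t - y j)) ^ 2 := by
  have hsub (j : Fin (n + 1)) :
      (cauchy (Fin.cons t x) y).submatrix Fin.succ j.succAbove = cauchy x (y ∘ j.succAbove) :=
    rfl
  rw [borchardtPoly, eval_sub, eval_mul, eval_cauchyRowPoly _ _ ht, eval_cauchyRowPoly _ _ ht,
    eval_cauchyRowPoly _ _ ht, borchardtDefect, det_succ_row_zero, det_succ_row_zero,
    permanent_succ_row_zero]
  simp only [submatrix_map, hsub]
  simp only [cauchy, map_apply, of_apply, Fin.cons_zero, pow_one, mul_comm, mul_left_comm,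
    mul_assoc]
  ring

theorem eval_borchardtPoly_node (x : Fin n → K) (y : Fin (n + 1) → K) (j : Fin (n + 1))
    (h : (cauchy x (y ∘ j.succAbove)).borchardtDefect = 0) :
    (borchardtPoly x y).eval (y j) = 0 := by
  rw [borchardtDefect, sub_eq_zero] at h
  rw [borchardtPoly, eval_sub, eval_mul, eval_cauchyRowPoly_node _ _ two_ne_zero,
    eval_cauchyRowPoly_node _ _ one_ne_zero, eval_cauchyRowPoly_node _ _ one_ne_zero, h]
  ring

theorem natDegree_borchardtPoly_le (x : Fin n → K) (y : Fin (n + 1) → K) :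
    (borchardtPoly x y).natDegree ≤ 2 * n := by
  have h (c : Fin (n + 1) → K) (k : ℕ) : (cauchyRowPoly y c k).natDegree ≤ k * n := by
    simpa using natDegree_cauchyRowPoly_le y c k
  exact (natDegree_sub_le _ _).trans <| max_le (h _ 2) <|
    natDegree_mul_le.trans <| (add_le_add (h _ 1) (h _ 1)).trans (by omega)

end Borchardt

theorem Matrix.borchardtDefect_cauchy {n : ℕ} (x y : Fin n → K) (h : ∀ i j, x i ≠ y j) :
    (cauchy x y).borchardtDefect = 0 := by
  induction n with
  | zero => simp [borchardtDefect, permanent_isEmpty]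
  | succ n ih =>
    by_cases hx : Function.Injective x
    swap
    · obtain ⟨i, i', hxi, hi⟩ := Function.not_injective_iff.mp hx
      exact borchardtDefect_eq_zero_of_row_eq _ hi
        (funext fun j => by simp only [cauchy, of_apply, hxi])
    by_cases hy : Function.Injective y
    swap
    · obtain ⟨j, j', hyj, hj⟩ := Function.not_injective_iff.mp hy
      exact borchardtDefect_eq_zero_of_column_eq _ hj fun i => by simp only [cauchy, of_apply, hyj]
    have hpoly : borchardtPoly (Fin.tail x) y = 0 := by
      refine eq_zero_of_natDegree_lt_card_of_eval_eq_zero _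
        (hy.sumElim (hx.comp (Fin.succ_injective _)) fun j i => (h i.succ j).symm) ?_ ?_
      · rintro (j | i)
        · exact eval_borchardtPoly_node _ _ j (ih _ _ fun a b => h a.succ _)
        · rw [Sum.elim_inr, Function.comp_apply, eval_borchardtPoly _ _ (h i.succ),
            borchardtDefect_eq_zero_of_row_eq _ (Fin.succ_ne_zero i).symm
              (funext fun j => by simp [cauchy, Fin.tail]), zero_mul]
      · simp only [Fintype.card_sum, Fintype.card_fin]
        linarith [natDegree_borchardtPoly_le (Fin.tail x) y]
    have hx0 := eval_borchardtPoly (Fin.tail x) y (h 0)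
    rwa [hpoly, eval_zero, Fin.cons_self_tail, eq_comm, mul_eq_zero,
      or_iff_left (pow_ne_zero 2 (prod_ne_zero_iff.mpr fun j _ => sub_ne_zero.mpr (h 0 j)))] at hx0

theorem stmt_7_general (n : ℕ) (M : Matrix (Fin n) (Fin n) ℝ)
    (hrank : M.rank = 2) (hM : ∀ i j, M i j ≠ 0) :
    (Matrix.of fun i j => ((M i j)⁻¹) ^ 2).det =
      (Matrix.of fun i j => (M i j)⁻¹).det *
        (Matrix.of fun i j => (M i j)⁻¹).permanent := by
  obtain ⟨u, x, w, y, hM'⟩ := M.exists_eq_mul_mul_sub_of_rank_le_two hrank.le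
  have hxy (i j) : x i ≠ y j := fun hxy => hM i j (by rw [hM', hxy, sub_self, mul_zero])
  have hinv :
      (of fun i j => (M i j)⁻¹) = of fun i j => (u i)⁻¹ * (w j)⁻¹ * cauchy x y i j := by
    ext i j
    simp only [of_apply, hM', cauchy, mul_inv]
  rw [← sub_eq_zero]
  change (of fun i j => (M i j)⁻¹).borchardtDefect = 0
  rw [hinv, borchardtDefect_of_mul_mul, borchardtDefect_cauchy x y hxy, mul_zero]

theorem stmt_7 (n : ℕ) (hn : 0 < n) (M : Matrix (Fin n) (Fin n) ℝ)
    (hrank : M.rank = 2) (hM : ∀ i j, M i j ≠ 0) :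
    (Matrix.of fun i j => ((M i j)⁻¹) ^ 2).det =
      (Matrix.of fun i j => (M i j)⁻¹).det *
        (Matrix.of fun i j => (M i j)⁻¹).permanent :=
  stmt_7_general n M hrank hM
end
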